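/- arXiv:2501.08947 — 5 statements merged into one kernel-verified Lean document; each statement's English description precedes it below -/
import Mathlib

section
/- Let α be a type of nodes, τ a type of node types with a typing function type : α → τ and a set T ⊆ τ of tainted types. Model a Graph API execution as states that are sets of nodes: a relation step : Λ → Set α → Set α → Prop over a type Λ of rule labels. Suppose (source-rule law) for every label r and states a, b with step r a b, if some node n ∈ b \ a has type n ∈ T then r belongs to a distinguished set srcRules : Set Λ; and suppose (sink-rule law) a set sinkRules : Set Λ and a use-assignment Use : Λ → Set α → Set α → Set α with Use r a b ⊆ a, such that for every step step r a b, if some node n ∈ Use r a b has type n ∈ T then r ∈ sinkRules. Then: for any run G 0, G 1, …, G k with step (r (i+1)) (G i) (G (i+1)) for all i < k, any index i < k, and any node n with type n ∈ T, n ∈ Use (r (i+1)) (G i) (G (i+1)), and n ∉ G 0, there exists j with 1 ≤ j ≤ i such that n ∈ G j \ G (j-1), the rule r j belongs to srcRules, and the rule r (i+1) belongs to sinkRules. In other words, every execution in which a tainted node absent from the initial state is used contains a source-rule application creating that node followed later by a sink-rule application using it (a tainted flow instance). -/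
/-- The paper's Theorem "BAC vulnerability and tainted flow instance":
every execution in which a tainted node absent from the initial state is used
contains a source-rule application creating that node followed later by a
sink-rule application using it. -/
theorem tainted_flow_instance
    {α τ Λ : Type*} (type : α → τ) (T : Set τ)
    (step : Λ → Set α → Set α → Prop)
    (srcRules sinkRules : Set Λ)
    (Use : Λ → Set α → Set α → Set α)
    (hUse : ∀ (r : Λ) (a b : Set α), Use r a b ⊆ a)
    (hsrc : ∀ (r : Λ) (a b : Set α), step r a b →
      ∀ n : α, n ∈ b \ a → type n ∈ T → r ∈ srcRules)
    (hsink : ∀ (r : Λ) (a b : Set α), step r a b →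
      ∀ n : α, n ∈ Use r a b → type n ∈ T → r ∈ sinkRules)
    (G : ℕ → Set α) (r : ℕ → Λ) (k : ℕ)
    (hrun : ∀ i, i < k → step (r (i + 1)) (G i) (G (i + 1)))
    (i : ℕ) (hik : i < k) (n : α)
    (hT : type n ∈ T)
    (hused : n ∈ Use (r (i + 1)) (G i) (G (i + 1)))
    (h0 : n ∉ G 0) :
    ∃ j, 1 ≤ j ∧ j ≤ i ∧ n ∈ G j ∧ n ∉ G (j - 1) ∧
      r j ∈ srcRules ∧ r (i + 1) ∈ sinkRules := by
  have hni : n ∈ G i := hUse _ _ _ hused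
  have hP : ∃ m, n ∈ G m := ⟨i, hni⟩
  classical
  set j := Nat.find hP with hj
  have hjmem : n ∈ G j := Nat.find_spec hP
  have hj1 : 1 ≤ j := by
    rcases Nat.eq_zero_or_pos j with h | h
    · exact absurd (h ▸ hjmem) h0
    · exact h
  have hji : j ≤ i := Nat.find_le hni
  have hnot : n ∉ G (j - 1) := Nat.find_min hP (by omega)
  have hstep : step (r j) (G (j - 1)) (G j) := by
    have : j - 1 + 1 = j := by omega
    rw [← this]
    exact hrun (j - 1) (by omega)
  exact ⟨j, hj1, hji, hjmem, hnot,
    hsrc _ _ _ hstep n ⟨hjmem, hnot⟩ hT,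
    hsink _ _ _ (hrun i hik) n hused hT⟩
end

section
/- Let σ be a type of states, Λ a type of labels, and step : Λ → σ → σ → Prop a labeled transition relation. Define a run from a to b over a label list l inductively: over the empty list a run exists iff a = b; over r :: l' a run exists iff there is c with step r a c and a run from c to b over l'. Say labels r and r' are sequentially independent if whenever step r a b and step r' b c, there exists d with step r' a d and step r d c. Let r_src be a label and w a list of labels such that r_src is sequentially independent from every label occurring in w. If there exist states a, b, c with step r_src a b and a run from b to c over w, then there exists a state b' with a run from a to b' over w and step r_src b' c; that is, the r_src step can be shifted across the entire intermediate sequence toward the end, preserving the initial and final states. -/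
/-- A run from `a` to `b` over a list of labels. -/
inductive Run {σ Λ : Type*} (step : Λ → σ → σ → Prop) : σ → List Λ → σ → Prop
  | nil (a : σ) : Run step a [] a
  | cons {a c b : σ} {r : Λ} {l : List Λ} :
      step r a c → Run step c l b → Run step a (r :: l) b

/-- Labels `r` and `r'` are sequentially independent if two consecutive steps
`r` then `r'` can be reversed, preserving endpoints. -/
def SeqIndep {σ Λ : Type*} (step : Λ → σ → σ → Prop) (r r' : Λ) : Prop :=
  ∀ a b c : σ, step r a b → step r' b c → ∃ d : σ, step r' a d ∧ step r d c

/-- Forward shifting lemma: a step of `r_src` can be shifted across an entire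
intermediate sequence `w` of labels, each of which is sequentially independent
from `r_src`, toward the end, preserving initial and final states. -/
theorem shift_source_forward {σ Λ : Type*} (step : Λ → σ → σ → Prop)
    (r_src : Λ) (w : List Λ)
    (hindep : ∀ r' ∈ w, SeqIndep step r_src r')
    (a b c : σ) (hstep : step r_src a b) (hrun : Run step b w c) :
    ∃ b' : σ, Run step a w b' ∧ step r_src b' c := by
  induction hrun generalizing a with
  | nil => exact ⟨a, .nil a, hstep⟩
  | cons hfirst _ ih =>
    obtain ⟨d, had, hd⟩ := hindep _ List.mem_cons_self _ _ _ hstep hfirst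
    obtain ⟨b', hrun', hb'c⟩ := ih (fun r' hr' => hindep r' (List.mem_cons_of_mem _ hr')) d hd
    exact ⟨b', .cons had hrun', hb'c⟩
end

section
/- Let σ be a type of states, Λ a type of labels, and step : Λ → σ → σ → Prop a labeled transition relation, with runs over label lists defined inductively as usual. Say labels r and r' are sequentially independent if whenever step r a b and step r' b c, there exists d with step r' a d and step r d c. Let r_sink be a label and w a list of labels such that every label occurring in w is sequentially independent from r_sink (i.e., for each r in w, the pair (r, r_sink) satisfies the swap property). If there exist states b, c, d with a run from b to c over w and step r_sink c d, then there exists a state c' with step r_sink b c' and a run from c' to d over w; that is, the r_sink step can be shifted backwards across the entire intermediate sequence toward the beginning, preserving the initial and final states. -/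
/-- Backward shifting lemma: a step of `r_sink` can be shifted backwards across
an entire intermediate sequence `w` of labels, each of which is sequentially
independent from `r_sink`, toward the beginning, preserving initial and final
states. -/
theorem shift_sink_backward {σ Λ : Type*} (step : Λ → σ → σ → Prop)
    (r_sink : Λ) (w : List Λ)
    (hindep : ∀ r ∈ w, SeqIndep step r r_sink)
    (b c d : σ) (hrun : Run step b w c) (hstep : step r_sink c d) :
    ∃ c' : σ, step r_sink b c' ∧ Run step c' w d := by
  induction hrun with
  | nil => exact ⟨d, hstep, .nil d⟩
  | @cons a x _ r l hr _ ih =>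
    obtain ⟨y, hy, hrun'⟩ := ih (fun r' hr' => hindep r' (List.mem_cons_of_mem r hr')) hstep
    obtain ⟨c', hc', hr'⟩ := hindep r List.mem_cons_self a x y hr hy
    exact ⟨c', hc', .cons hr' hrun'⟩
end

section
/- Let σ be a type of states, Λ a type of labels, step : Λ → σ → σ → Prop a labeled transition relation, and P : Λ → σ → σ → Prop an access control policy on steps. Let r_src and r_sink be labels and w a list of labels with r_src ∉ w and r_sink ∉ w, such that r_src is sequentially independent from every label occurring in w. Suppose there is an atomic indirect violation: states a, b, c, d with step r_src a b, a run from b to c over w, step r_sink c d, and ¬ P r_sink c d. Then there is a direct violation with the same endpoints and the same violating step: there exists a state b' with a run from a to b' over w, step r_src b' c, step r_sink c d, and ¬ P r_sink c d. In particular, under these sequential-independence conditions, every atomic indirect broken-access-control vulnerability reduces to a direct one in which the source step is immediately followed by the violating sink step. -/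
theorem Run.exists_run_step_of_step_run {σ Λ : Type*} {step : Λ → σ → σ → Prop} {r : Λ}
    {w : List Λ} {a b c : σ} (hindep : ∀ r' ∈ w, SeqIndep step r r')
    (hab : step r a b) (hbc : Run step b w c) :
    ∃ b' : σ, Run step a w b' ∧ step r b' c := by
  induction hbc generalizing a with
  | nil => exact ⟨a, .nil a, hab⟩
  | cons hstep _ ih =>
    obtain ⟨e, hae, hec⟩ := hindep _ List.mem_cons_self _ _ _ hab hstep
    obtain ⟨b', heb', hb'c⟩ :=
      ih (fun r' hr' => hindep r' (List.mem_cons_of_mem _ hr')) hec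
    exact ⟨b', .cons hae heb', hb'c⟩

theorem indirect_to_direct_violation_src_general {σ Λ : Type*}
    (step : Λ → σ → σ → Prop) (P : Λ → σ → σ → Prop)
    (r_src r_sink : Λ) (w : List Λ)
    (hindep : ∀ r ∈ w, SeqIndep step r_src r)
    (a b c d : σ)
    (hstep_src : step r_src a b) (hrun : Run step b w c)
    (hstep_sink : step r_sink c d) (hviol : ¬ P r_sink c d) :
    ∃ b' : σ, Run step a w b' ∧ step r_src b' c ∧
      step r_sink c d ∧ ¬ P r_sink c d := by
  obtain ⟨b', hrun', hstep'⟩ := hrun.exists_run_step_of_step_run hindep hstep_src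
  exact ⟨b', hrun', hstep', hstep_sink, hviol⟩

/-- Soundness for vulnerabilities (condition (1)): every atomic indirect
broken-access-control violation reduces to a direct one in which the source
step is immediately followed by the same violating sink step. -/
theorem indirect_to_direct_violation_src {σ Λ : Type*}
    (step : Λ → σ → σ → Prop) (P : Λ → σ → σ → Prop)
    (r_src r_sink : Λ) (w : List Λ)
    (hsrc_notin : r_src ∉ w) (hsink_notin : r_sink ∉ w)
    (hindep : ∀ r ∈ w, SeqIndep step r_src r)
    (a b c d : σ)
    (hstep_src : step r_src a b) (hrun : Run step b w c)
    (hstep_sink : step r_sink c d) (hviol : ¬ P r_sink c d) :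
    ∃ b' : σ, Run step a w b' ∧ step r_src b' c ∧
      step r_sink c d ∧ ¬ P r_sink c d :=
  indirect_to_direct_violation_src_general step P r_src r_sink w hindep a b c d hstep_src hrun
    hstep_sink hviol
end

section
/- Let σ be a type of states, Λ a type of labels, step : Λ → σ → σ → Prop a labeled transition relation, and P : Λ → σ → σ → Prop an access control policy on steps. Say P is stable under shift if for every swap witnessing sequential independence — i.e., whenever step r a b, step r' b c, step r' a d, and step r d c — one has (P r a b ↔ P r d c) and (P r' b c ↔ P r' a d). Let r_src and r_sink be labels and w a list of labels with r_src ∉ w and r_sink ∉ w, such that every label occurring in w is sequentially independent from r_sink, and suppose P is stable under shift. Suppose there is an atomic indirect violation: states a, b, c, d with step r_src a b, a run from b to c over w, step r_sink c d, and ¬ P r_sink c d. Then there is a direct violation starting from the same state: there exists a state b'' with step r_src a b, step r_sink b b'', a run from b'' to d over w, and ¬ P r_sink b b''. In particular, under these conditions every atomic indirect broken-access-control vulnerability reduces to a direct one, and the shifted sink step still violates the policy. -/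
/-- A policy `P` is stable under shift if swapping a sequentially independent
pair of steps preserves the policy value of each of the two steps. -/
def StableUnderShift {σ Λ : Type*} (step : Λ → σ → σ → Prop)
    (P : Λ → σ → σ → Prop) : Prop :=
  ∀ (r r' : Λ) (a b c d : σ), step r a b → step r' b c → step r' a d →
    step r d c → (P r a b ↔ P r d c) ∧ (P r' b c ↔ P r' a d)

namespace Run

variable {σ Λ : Type*} {step : Λ → σ → σ → Prop}

theorem shift_step_to_front {P : Λ → σ → σ → Prop} (hstable : StableUnderShift step P)
    {r : Λ} {w : List Λ} (hindep : ∀ r' ∈ w, SeqIndep step r' r) {b c d : σ}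
    (hrun : Run step b w c) (hstep : step r c d) :
    ∃ b' : σ, step r b b' ∧ Run step b' w d ∧ (P r b b' ↔ P r c d) := by
  induction hrun with
  | nil => exact ⟨d, hstep, nil d, Iff.rfl⟩
  | @cons b x c r' l hbx _ ih =>
    obtain ⟨x', hxx', hrun', hP⟩ :=
      ih (fun r'' hr'' => hindep r'' (List.mem_cons_of_mem _ hr'')) hstep
    obtain ⟨b', hbb', hb'x'⟩ := hindep r' List.mem_cons_self b x x' hbx hxx'
    have hswap := (hstable r' r b x x' b' hbx hxx' hbb' hb'x').2
    exact ⟨b', hbb', cons hb'x' hrun', hswap.symm.trans hP⟩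

end Run

theorem indirect_to_direct_violation_sink_general {σ Λ : Type*}
    (step : Λ → σ → σ → Prop) (P : Λ → σ → σ → Prop)
    (r_src r_sink : Λ) (w : List Λ)
    (hindep : ∀ r ∈ w, SeqIndep step r r_sink)
    (hstable : StableUnderShift step P)
    (a b c d : σ)
    (hstep_src : step r_src a b) (hrun : Run step b w c)
    (hstep_sink : step r_sink c d) (hviol : ¬ P r_sink c d) :
    ∃ b'' : σ, step r_src a b ∧ step r_sink b b'' ∧
      Run step b'' w d ∧ ¬ P r_sink b b'' := by
  obtain ⟨b'', hsink, hrun', hP⟩ := Run.shift_step_to_front hstable hindep hrun hstep_sink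
  exact ⟨b'', hstep_src, hsink, hrun', hP.not.mpr hviol⟩

/-- Soundness for vulnerabilities (condition (2)): under stability under shift,
every atomic indirect broken-access-control violation reduces to a direct one
(the sink step is shifted backwards across the intermediate steps), and the
shifted sink step still violates the policy. -/
theorem indirect_to_direct_violation_sink {σ Λ : Type*}
    (step : Λ → σ → σ → Prop) (P : Λ → σ → σ → Prop)
    (r_src r_sink : Λ) (w : List Λ)
    (hsrc_notin : r_src ∉ w) (hsink_notin : r_sink ∉ w)
    (hindep : ∀ r ∈ w, SeqIndep step r r_sink)
    (hstable : StableUnderShift step P)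
    (a b c d : σ)
    (hstep_src : step r_src a b) (hrun : Run step b w c)
    (hstep_sink : step r_sink c d) (hviol : ¬ P r_sink c d) :
    ∃ b'' : σ, step r_src a b ∧ step r_sink b b'' ∧
      Run step b'' w d ∧ ¬ P r_sink b b'' :=
  indirect_to_direct_violation_sink_general step P r_src r_sink w hindep hstable a b c d hstep_src
    hrun hstep_sink hviol
end
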